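/- arXiv:math/0510680 — 5 statements merged into one kernel-verified Lean document; each statement's English description precedes it below -/
import Mathlib

section
/- If X has Menger's property and K is σ-compact, then X × K has Menger's property. -/
/-- `X` has Menger's property: for each sequence of open covers there are finite
subfamilies whose union covers `X`. -/
def Menger (X : Type*) [TopologicalSpace X] : Prop :=
  ∀ U : ℕ → Set (Set X),
    (∀ n, ∀ s ∈ U n, IsOpen s) → (∀ n, ⋃₀ U n = Set.univ) →
    ∃ F : ℕ → Finset (Set X), (∀ n, ↑(F n) ⊆ U n) ∧
      (⋃ n, ⋃₀ ((F n : Set (Set X)))) = Set.univ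

/-- If X is Menger and K is sigma-compact then X x K is Menger. -/
theorem stmt_7 (X K : Type*) [TopologicalSpace X] [TopologicalSpace K]
    (hX : Menger X) [SigmaCompactSpace K] : Menger (X × K) := by
  classical
  intro U hUo hUc
  set Km : ℕ → Set K := compactCovering K with hKm
  -- For each m, i: the "tube" cover of X
  set W : ℕ → ℕ → Set (Set X) := fun m i =>
    {w | IsOpen w ∧ ∃ t : Finset (Set (X × K)), ↑t ⊆ U (Nat.pair m i) ∧
      w ×ˢ Km m ⊆ ⋃₀ (t : Set (Set (X × K)))} with hW
  have hWo : ∀ m i, ∀ s ∈ W m i, IsOpen s := fun m i s hs => hs.1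
  have hWc : ∀ m i, ⋃₀ W m i = Set.univ := by
    intro m i
    apply Set.eq_univ_of_forall
    intro x
    have hcomp : IsCompact (({x} : Set X) ×ˢ Km m) :=
      isCompact_singleton.prod (isCompact_compactCovering K m)
    have hcover : (({x} : Set X) ×ˢ Km m) ⊆ ⋃ s ∈ U (Nat.pair m i), s := by
      rw [← Set.sUnion_eq_biUnion, hUc]
      exact Set.subset_univ _
    obtain ⟨b, hbU, hbfin, hbsub⟩ :=
      hcomp.elim_finite_subcover_image (fun s hs => hUo _ s hs) hcover
    have hopen : IsOpen (⋃ s ∈ b, s) :=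
      isOpen_biUnion fun s hs => hUo _ s (hbU hs)
    obtain ⟨u, v, hu, hv, hxu, hKv, huv⟩ :=
      generalized_tube_lemma isCompact_singleton (isCompact_compactCovering K m)
        hopen hbsub
    refine Set.mem_sUnion.mpr ⟨u, ⟨hu, hbfin.toFinset, ?_, ?_⟩, hxu rfl⟩
    · intro s hs
      exact hbU (hbfin.mem_toFinset.mp hs)
    · intro p hp
      have : p ∈ u ×ˢ v := ⟨hp.1, hKv hp.2⟩
      have hpb := huv this
      simp only [Set.mem_iUnion] at hpb
      obtain ⟨s, hs, hps⟩ := hpb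
      exact ⟨s, hbfin.mem_toFinset.mpr hs, hps⟩
  -- apply Menger of X for each m
  have hG : ∀ m, ∃ G : ℕ → Finset (Set X), (∀ i, ↑(G i) ⊆ W m i) ∧
      (⋃ i, ⋃₀ ((G i : Set (Set X)))) = Set.univ :=
    fun m => hX (W m) (hWo m) (hWc m)
  choose G hG1 hG2 using hG
  -- selection of the finite subfamilies
  let sel : ℕ → ℕ → Set X → Finset (Set (X × K)) := fun m i w =>
    if h : w ∈ W m i then h.2.choose else ∅
  have hsel : ∀ m i w, w ∈ W m i →
      ↑(sel m i w) ⊆ U (Nat.pair m i) ∧ w ×ˢ Km m ⊆ ⋃₀ (sel m i w : Set (Set (X × K))) := by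
    intro m i w h
    simp only [sel, dif_pos h]
    exact h.2.choose_spec
  refine ⟨fun n => (G n.unpair.1 n.unpair.2).biUnion
      (fun w => sel n.unpair.1 n.unpair.2 w), ?_, ?_⟩
  · intro n s hs
    simp only [Finset.coe_biUnion, Set.mem_iUnion, Finset.mem_coe] at hs
    obtain ⟨w, hw, hsw⟩ := hs
    have hwW : w ∈ W n.unpair.1 n.unpair.2 := hG1 _ _ hw
    have := (hsel _ _ w hwW).1 hsw
    rwa [Nat.pair_unpair] at this
  · apply Set.eq_univ_of_forall
    rintro ⟨x, k⟩
    have hk : k ∈ ⋃ m, Km m := by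
      rw [hKm, iUnion_compactCovering]; trivial
    obtain ⟨m, hkm⟩ := Set.mem_iUnion.mp hk
    have hx : x ∈ ⋃ i, ⋃₀ ((G m i : Set (Set X))) := by
      rw [hG2 m]; trivial
    obtain ⟨i, hi⟩ := Set.mem_iUnion.mp hx
    obtain ⟨w, hwG, hxw⟩ := hi
    have hwW : w ∈ W m i := hG1 m i hwG
    have hmem : (x, k) ∈ ⋃₀ (sel m i w : Set (Set (X × K))) :=
      (hsel m i w hwW).2 ⟨hxw, hkm⟩
    obtain ⟨s, hs, hps⟩ := hmem
    refine Set.mem_iUnion.mpr ⟨Nat.pair m i, ⟨s, ?_, hps⟩⟩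
    simp only [Nat.unpair_pair, Finset.coe_biUnion, Set.mem_iUnion, Finset.mem_coe]
    exact ⟨w, hwG, hs⟩
end

section
/- (Hurewicz characterization, combinatorial direction) If X is a separable zero-dimensional metrizable space and some continuous image of X in ℕ^ℕ is dominating, then X does not have Menger's property. -/
open Filter

abbrev Baire : Type := ℕ → ℕ

/-- g ≤* f : eventually g n ≤ f n. -/
def EvLE (g f : ℕ → ℕ) : Prop := ∀ᶠ n in atTop, g n ≤ f n

/-- D is dominating in Baire space. -/
def Dominating (D : Set Baire) : Prop := ∀ g : Baire, ∃ f ∈ D, EvLE g f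

/-- next_a(n) = min {k ∈ a : n < k}. -/
noncomputable def NextFn (a : Set ℕ) (n : ℕ) : ℕ := sInf {k ∈ a | n < k}

/-- a is an almost subset of b: a \ b is finite. -/
def AlmostSubset (a b : Set ℕ) : Prop := (a \ b).Finite

/-- a/h = {n : a ∩ [h n, h (n+1)) ≠ ∅}. -/
def quotBy (a : Set ℕ) (h : ℕ → ℕ) : Set ℕ :=
  {n | (a ∩ Set.Ico (h n) (h (n + 1))).Nonempty}

/-- G ⊆ [ℕ]^∞ is groupwise dense: it contains all infinite almost-subsets of its
members, and for every partition of ℕ into consecutive finite intervals there is an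
infinite set of intervals whose union belongs to G. -/
def GroupwiseDense (G : Set (Set ℕ)) : Prop :=
  (∀ b ∈ G, ∀ a : Set ℕ, a.Infinite → AlmostSubset a b → a ∈ G) ∧
  ∀ h : ℕ → ℕ, StrictMono h → h 0 = 0 →
    ∃ b : Set ℕ, b.Infinite ∧ (⋃ n ∈ b, Set.Ico (h n) (h (n + 1))) ∈ G

/-- Hurewicz, combinatorial direction: if some continuous image of X in Baire space
is dominating then X is not Menger. -/
theorem stmt_14 (X : Type*) [TopologicalSpace X]
    [TopologicalSpace.SeparableSpace X] [TopologicalSpace.MetrizableSpace X]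
    (hzd : ∃ B : Set (Set X), TopologicalSpace.IsTopologicalBasis B ∧ ∀ s ∈ B, IsClopen s)
    (hdom : ∃ Ψ : X → Baire, Continuous Ψ ∧ Dominating (Set.range Ψ)) :
    ¬ Menger X := by
  obtain ⟨Ψ, hΨc, hΨd⟩ := hdom
  intro hM
  -- Key step: for every N there is a bound gN with, for every x, a witness n ≥ N
  -- where Ψ x n < gN n.
  have key : ∀ N : ℕ, ∃ gN : ℕ → ℕ, ∀ x : X, ∃ n, N ≤ n ∧ Ψ x n < gN n := by
    intro N
    set U : ℕ → Set (Set X) := fun j => {s | ∃ m : ℕ, s = {x | Ψ x (N + j) < m}} with hU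
    have hopen : ∀ j, ∀ s ∈ U j, IsOpen s := by
      intro j s hs
      obtain ⟨m, rfl⟩ := hs
      have hc : Continuous (fun x => Ψ x (N + j)) := (continuous_apply (N + j)).comp hΨc
      exact hc.isOpen_preimage (Set.Iio m) (isOpen_discrete _)
    have hcov : ∀ j, ⋃₀ U j = Set.univ := by
      intro j
      ext x
      simp only [Set.mem_sUnion, Set.mem_univ, iff_true]
      exact ⟨{y | Ψ y (N + j) < Ψ x (N + j) + 1}, ⟨Ψ x (N + j) + 1, rfl⟩,
        Nat.lt_succ_self _⟩
    obtain ⟨F, hF, hFcov⟩ := hM U hopen hcov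
    have h1 : ∀ j, ∀ s : Set X, s ∈ F j → ∃ m : ℕ, s = {x | Ψ x (N + j) < m} := by
      intro j s hs
      exact hF j hs
    choose m hm using h1
    set b : ℕ → ℕ := fun j => ((F j).attach.sup fun t => m j t.1 t.2) + 1 with hb
    refine ⟨fun n => b (n - N), ?_⟩
    intro x
    have hx : x ∈ ⋃ n, ⋃₀ ((F n : Set (Set X))) := hFcov ▸ Set.mem_univ x
    obtain ⟨_, ⟨j, rfl⟩, s, hsF, hxs⟩ := hx
    have hsF' : s ∈ F j := hsF
    refine ⟨N + j, Nat.le_add_right _ _, ?_⟩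
    have hxlt : Ψ x (N + j) < m j s hsF' := by
      have := hm j s hsF'
      rw [this] at hxs
      exact hxs
    have hle : m j s hsF' ≤ (F j).attach.sup fun t => m j t.1 t.2 :=
      Finset.le_sup (f := fun t : {u // u ∈ F j} => m j t.1 t.2) (Finset.mem_attach _ ⟨s, hsF'⟩)
    have hlt2 : Ψ x (N + j) < b j := Nat.lt_succ_of_le (le_trans hxlt.le hle)
    show Ψ x (N + j) < b (N + j - N)
    rw [Nat.add_sub_cancel_left]
    exact hlt2
  choose g hg using key
  -- diagonal bound
  set G : ℕ → ℕ := fun n => (Finset.range (n + 1)).sup fun N => g N n with hG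
  have hGbig : ∀ x : X, ∀ N : ℕ, ∃ n, N ≤ n ∧ Ψ x n < G n := by
    intro x N
    obtain ⟨n, hNn, hlt⟩ := hg N x
    refine ⟨n, hNn, lt_of_lt_of_le hlt ?_⟩
    show g N n ≤ (Finset.range (n + 1)).sup fun N => g N n
    exact Finset.le_sup (f := fun N => g N n) (Finset.mem_range.mpr (Nat.lt_succ_of_le hNn))
  obtain ⟨f, ⟨x, rfl⟩, hf⟩ := hΨd G
  obtain ⟨N, hN⟩ := (Filter.eventually_atTop).mp hf
  obtain ⟨n, hNn, hlt⟩ := hGbig x N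
  exact absurd (hN n hNn) (not_le_of_gt hlt)
end

section
/- (Main theorem) A separable zero-dimensional metrizable space X has Menger's property if and only if for every continuous map Ψ : X → ℕ^ℕ with image Y = Ψ[X], the family G = {a ∈ [ℕ]^∞ : ∀ f ∈ Y, next_a ≰* f} is groupwise dense. -/
open Filter

set_option linter.unusedSectionVars false
set_option maxHeartbeats 1000000

namespace Stmt16

lemma not_evLE {g f : ℕ → ℕ} : ¬ EvLE g f ↔ ∃ᶠ n in atTop, f n < g n := by
  rw [EvLE, not_eventually]
  exact frequently_congr (Eventually.of_forall fun n => not_le)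

lemma nextFn_spec {a : Set ℕ} (ha : a.Infinite) (n : ℕ) :
    NextFn a n ∈ a ∧ n < NextFn a n := by
  have h : {k | k ∈ a ∧ n < k}.Nonempty := by
    obtain ⟨k, hk, hk2⟩ := ha.exists_gt n
    exact ⟨k, hk, hk2⟩
  exact Nat.sInf_mem h

lemma nextFn_le {a : Set ℕ} {n k : ℕ} (hk : k ∈ a) (hn : n < k) : NextFn a n ≤ k :=
  Nat.sInf_le ⟨hk, hn⟩

lemma nextFn_ge {a : Set ℕ} (ha : a.Infinite) {n K : ℕ}
    (h : ∀ k ∈ a, n < k → K ≤ k) : K ≤ NextFn a n := by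
  obtain ⟨h1, h2⟩ := nextFn_spec ha n
  exact h _ h1 h2

lemma nextFn_eventually_le {a b : Set ℕ} (ha : a.Infinite) (hab : (a \ b).Finite) :
    ∀ᶠ n in atTop, NextFn b n ≤ NextFn a n := by
  obtain ⟨M, hM⟩ : ∃ M, ∀ x ∈ a \ b, x ≤ M := by
    obtain ⟨M, hM⟩ := hab.bddAbove
    exact ⟨M, fun x hx => hM hx⟩
  filter_upwards [eventually_ge_atTop M] with n hn
  obtain ⟨hmem, hlt⟩ := nextFn_spec ha n
  have hb : NextFn a n ∈ b := by
    by_contra hc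
    exact absurd (hM _ ⟨hmem, hc⟩) (by omega)
  exact nextFn_le hb hlt

lemma menger_oneshot {X : Type*} [TopologicalSpace X] (hX : Menger X)
    (O : ℕ → ℕ → Set X) (hop : ∀ n k, IsOpen (O n k))
    (hmono : ∀ n, Monotone (O n)) (hcov : ∀ n x, ∃ k, x ∈ O n k) :
    ∃ g : ℕ → ℕ, ∀ x, ∃ n, x ∈ O n (g n) := by
  obtain ⟨F, hF1, hF2⟩ := hX (fun n => Set.range (O n))
    (by rintro n s ⟨k, rfl⟩; exact hop n k)
    (by
      intro n
      apply Set.eq_univ_of_forall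
      intro x
      obtain ⟨k, hk⟩ := hcov n x
      exact ⟨O n k, ⟨k, rfl⟩, hk⟩)
  classical
  have key : ∀ n (s : Finset (Set X)), (↑s : Set (Set X)) ⊆ Set.range (O n) →
      ∃ gn, ⋃₀ (↑s : Set (Set X)) ⊆ O n gn := by
    intro n s
    induction s using Finset.induction_on with
    | empty => exact fun _ => ⟨0, by simp⟩
    | @insert t s ht ih =>
      intro hsub
      obtain ⟨k, hk⟩ := hsub (Finset.mem_coe.2 (Finset.mem_insert_self t s))
      obtain ⟨g', hg'⟩ := ih (fun u hu => hsub (by simp [Finset.mem_insert]; right; exact hu))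
      refine ⟨max k g', ?_⟩
      rw [Finset.coe_insert, Set.sUnion_insert]
      rintro x (hx | hx)
      · exact hmono n (le_max_left _ _) (hk ▸ hx)
      · exact hmono n (le_max_right _ _) (hg' hx)
  choose g hg using fun n => key n (F n) (hF1 n)
  refine ⟨g, fun x => ?_⟩
  have hx : x ∈ ⋃ n, ⋃₀ ((F n : Set (Set X))) := hF2 ▸ Set.mem_univ x
  obtain ⟨_, ⟨n, rfl⟩, hxn⟩ := hx
  exact ⟨n, hg n hxn⟩

lemma mengerB {X : Type*} [TopologicalSpace X] (hX : Menger X)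
    (O : ℕ → ℕ → Set X) (hop : ∀ n k, IsOpen (O n k))
    (hmono : ∀ n, Monotone (O n)) (hcov : ∀ n x, ∃ k, x ∈ O n k) :
    ∃ g : ℕ → ℕ, ∀ x, ∃ᶠ n in atTop, x ∈ O n (g n) := by
  have step : ∀ i : ℕ, ∃ g : ℕ → ℕ, ∀ x, ∃ n, x ∈ O (n + i) (g n) := fun i =>
    menger_oneshot hX (fun n k => O (n + i) k) (fun n k => hop _ k)
      (fun n => hmono _) (fun n x => hcov _ x)
  choose gf hgf using step
  refine ⟨fun m => (Finset.range (m + 1)).sup fun i => gf i (m - i), fun x => ?_⟩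
  rw [frequently_atTop]
  intro i
  obtain ⟨n, hn⟩ := hgf i x
  refine ⟨n + i, le_add_self, ?_⟩
  have hmem : i ∈ Finset.range (n + i + 1) := by
    rw [Finset.mem_range]; omega
  have hle : gf i n ≤ (Finset.range (n + i + 1)).sup fun j => gf j (n + i - j) := by
    have := Finset.le_sup (f := fun j => gf j (n + i - j)) hmem
    simpa using this
  exact hmono _ hle hn



variable {X : Type*} [TopologicalSpace X]

/-- Φ x m = max (m+2) (least k with h k > Ψ x j for all j ≤ h (m+1)). -/
noncomputable def Phi (Ψ : X → Baire) (h : ℕ → ℕ) (x : X) (m : ℕ) : ℕ :=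
  max (m + 2) (sInf {k | ∀ j ≤ h (m + 1), Ψ x j < h k})

lemma phi_set_nonempty (Ψ : X → Baire) {h : ℕ → ℕ} (hh : StrictMono h) (x : X) (m : ℕ) :
    {k | ∀ j ≤ h (m + 1), Ψ x j < h k}.Nonempty := by
  refine ⟨(Finset.range (h (m + 1) + 1)).sup (Ψ x) + 1, fun j hj => ?_⟩
  have h1 : Ψ x j ≤ (Finset.range (h (m + 1) + 1)).sup (Ψ x) :=
    Finset.le_sup (by rw [Finset.mem_range]; omega)
  have h2 : (Finset.range (h (m + 1) + 1)).sup (Ψ x) + 1 ≤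
      h ((Finset.range (h (m + 1) + 1)).sup (Ψ x) + 1) := hh.le_apply
  omega

lemma phi_spec (Ψ : X → Baire) {h : ℕ → ℕ} (hh : StrictMono h) (x : X) (m : ℕ) :
    ∀ j ≤ h (m + 1), Ψ x j < h (Phi Ψ h x m) := by
  intro j hj
  have h1 := Nat.sInf_mem (phi_set_nonempty Ψ hh x m) j hj
  exact lt_of_lt_of_le h1 (hh.monotone (le_max_right _ _))

set_option linter.unusedSectionVars false in
lemma phi_ge (Ψ : X → Baire) (h : ℕ → ℕ) (x : X) (m : ℕ) : m + 2 ≤ Phi Ψ h x m :=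
  le_max_left _ _

/-- Orbit of 0 under Phi. -/
noncomputable def Orb (Ψ : X → Baire) (h : ℕ → ℕ) (x : X) : ℕ → ℕ
  | 0 => 0
  | j + 1 => Phi Ψ h x (Orb Ψ h x j)

lemma orb_strictMono (Ψ : X → Baire) (h : ℕ → ℕ) (x : X) : StrictMono (Orb Ψ h x) := by
  apply strictMono_nat_of_lt_succ
  intro j
  have := phi_ge Ψ h x (Orb Ψ h x j)
  show Orb Ψ h x j < Phi Ψ h x (Orb Ψ h x j)
  omega

lemma clopen_phi {Ψ : X → Baire} (hΨ : Continuous Ψ) (h : ℕ → ℕ) (m t : ℕ) :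
    IsClopen {x | Phi Ψ h x m = t} := by
  set N := h (m + 1) + 1 with hN
  have hτ : Continuous (fun x => (fun j : Fin N => Ψ x j)) :=
    continuous_pi fun j => (continuous_apply (j : ℕ)).comp hΨ
  have hset : {x | Phi Ψ h x m = t} =
      (fun x => (fun j : Fin N => Ψ x j)) ⁻¹'
        {σ : Fin N → ℕ | max (m + 2) (sInf {k | ∀ j : Fin N, σ j < h k}) = t} := by
    ext x
    simp only [Set.mem_setOf_eq, Set.mem_preimage]
    have : {k | ∀ j ≤ h (m + 1), Ψ x j < h k} = {k | ∀ j : Fin N, Ψ x (j : ℕ) < h k} := by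
      ext k
      constructor
      · intro hk j
        exact hk j (by omega)
      · intro hk j hj
        exact hk ⟨j, by omega⟩
    rw [Phi, this]
  rw [hset]
  exact (isClopen_discrete _).preimage hτ

lemma clopen_orb {Ψ : X → Baire} (hΨ : Continuous Ψ) (h : ℕ → ℕ) (j t : ℕ) :
    IsClopen {x | Orb Ψ h x j = t} := by
  induction j generalizing t with
  | zero =>
    by_cases h0 : t = 0
    · subst h0
      have : {x : X | Orb Ψ h x 0 = 0} = Set.univ := by
        ext x; simp [Orb]
      rw [this]; exact isClopen_univ
    · have : {x : X | Orb Ψ h x 0 = t} = ∅ := by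
        ext x; simp [Orb]; omega
      rw [this]; exact isClopen_empty
  | succ j ih =>
    have heq : {x | Orb Ψ h x (j + 1) = t} =
        ⋃ m, ({x | Orb Ψ h x j = m} ∩ {x | Phi Ψ h x m = t}) := by
      ext x
      simp only [Set.mem_iUnion, Set.mem_inter_iff, Set.mem_setOf_eq]
      constructor
      · intro hx; exact ⟨Orb Ψ h x j, rfl, hx⟩
      · rintro ⟨m, hm, hp⟩; show Phi Ψ h x (Orb Ψ h x j) = t; rw [hm]; exact hp
    constructor
    · rw [← isOpen_compl_iff]
      have hc : {x | Orb Ψ h x (j + 1) = t}ᶜ =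
          ⋃ m, ({x | Orb Ψ h x j = m} ∩ {x | Phi Ψ h x m = t}ᶜ) := by
        ext x
        simp only [Set.mem_compl_iff, Set.mem_iUnion, Set.mem_inter_iff, Set.mem_setOf_eq]
        constructor
        · intro hx; exact ⟨Orb Ψ h x j, rfl, hx⟩
        · rintro ⟨m, hm, hp⟩
          show ¬ Phi Ψ h x (Orb Ψ h x j) = t
          rw [hm]; exact hp
      rw [hc]
      exact isOpen_iUnion fun m =>
        ((ih m).isOpen.inter (clopen_phi hΨ h m t).isClosed.isOpen_compl)
    · rw [heq]
      exact isOpen_iUnion fun m => ((ih m).isOpen.inter (clopen_phi hΨ h m t).isOpen)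



lemma forward_gwd2 {X : Type*} [TopologicalSpace X] (hX : Menger X) (Ψ : X → Baire)
    (hΨ : Continuous Ψ) (h : ℕ → ℕ) (hh : StrictMono h) (h0 : h 0 = 0) :
    ∃ b : Set ℕ, b.Infinite ∧
      ((⋃ n ∈ b, Set.Ico (h n) (h (n + 1))).Infinite ∧
        ∀ f ∈ Set.range Ψ, ¬ EvLE (NextFn (⋃ n ∈ b, Set.Ico (h n) (h (n + 1)))) f) := by
  -- the covers
  set O : ℕ → ℕ → Set X := fun n k => {x | Orb Ψ h x (n + 1) < k} with hO
  have hop : ∀ n k, IsOpen (O n k) := by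
    intro n k
    have : O n k = ⋃ t ∈ Set.Iio k, {x | Orb Ψ h x (n + 1) = t} := by
      ext x
      simp only [hO, Set.mem_setOf_eq, Set.mem_iUnion, Set.mem_Iio, exists_prop]
      exact ⟨fun hx => ⟨_, hx, rfl⟩, fun ⟨t, ht, hxt⟩ => hxt ▸ ht⟩
    rw [this]
    exact isOpen_biUnion fun t _ => (clopen_orb hΨ h (n + 1) t).isOpen
  have hmono : ∀ n, Monotone (O n) := by
    intro n k k' hk x hx
    simp only [hO, Set.mem_setOf_eq] at hx ⊢
    omega
  have hcov : ∀ n x, ∃ k, x ∈ O n k := fun n x => ⟨Orb Ψ h x (n + 1) + 1, by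
    simp [hO]⟩
  obtain ⟨G, hG⟩ := mengerB hX O hop hmono hcov
  -- strictly monotone майorant
  set G' : ℕ → ℕ := fun n => (Finset.range (n + 1)).sup G + n with hG'
  have hG'mono : StrictMono G' := by
    apply strictMono_nat_of_lt_succ
    intro n
    have : (Finset.range (n + 1)).sup G ≤ (Finset.range (n + 1 + 1)).sup G :=
      Finset.sup_mono (Finset.range_subset_range.2 (by omega))
    simp only [hG']
    omega
  have hGG' : ∀ n, G n ≤ G' n := by
    intro n
    have : G n ≤ (Finset.range (n + 1)).sup G :=
      Finset.le_sup (Finset.mem_range.2 (by omega))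
    simp only [hG']
    omega
  -- the sparse block sequence
  set Bs : ℕ → ℕ := fun l => Nat.rec 0 (fun _ B => G' (G' (B + 1) + 1) + 1) l with hBs
  have hBs0 : Bs 0 = 0 := rfl
  have hBsS : ∀ l, Bs (l + 1) = G' (G' (Bs l + 1) + 1) + 1 := fun l => rfl
  have hG'ge : ∀ n, n ≤ G' n := fun n => hG'mono.le_apply
  have hBstep : ∀ l, Bs l + 2 ≤ Bs (l + 1) := by
    intro l
    have h1 := hG'ge (Bs l + 1)
    have h2 := hG'ge (G' (Bs l + 1) + 1)
    rw [hBsS]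
    omega
  have hBsSM : StrictMono Bs := strictMono_nat_of_lt_succ fun l => by
    have := hBstep l; omega
  have hBs2l : ∀ l, 2 * l ≤ Bs l := by
    intro l
    induction l with
    | zero => omega
    | succ l ih => have := hBstep l; omega
  have hBsbig : ∀ l, G' (2 * (l + 1)) ≤ Bs (l + 1) := by
    intro l
    have h1 : 2 * l + 2 ≤ G' (Bs l + 1) + 1 := by
      have := hG'ge (Bs l + 1); have := hBs2l l; omega
    have h2 : G' (2 * (l + 1)) ≤ G' (G' (Bs l + 1) + 1) := hG'mono.monotone (by omega)
    rw [hBsS]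
    omega
  refine ⟨Set.range Bs, Set.infinite_range_of_injective hBsSM.injective, ?_, ?_⟩
  · -- union is infinite
    refine Set.infinite_of_injective_forall_mem (f := fun l => h (Bs l))
      (hh.comp hBsSM).injective (fun l => ?_)
    refine Set.mem_biUnion ⟨l, rfl⟩ ?_
    exact Set.mem_Ico.2 ⟨le_refl _, hh (by omega)⟩
  · -- the main property
    rintro f ⟨x, rfl⟩
    rw [not_evLE, frequently_atTop]
    intro J
    set P : ℕ → ℕ := Orb Ψ h x with hP
    have hPSM : StrictMono P := orb_strictMono Ψ h x
    set a : Set ℕ := ⋃ n ∈ Set.range Bs, Set.Ico (h n) (h (n + 1)) with ha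
    have hainf : a.Infinite := by
      refine Set.infinite_of_injective_forall_mem (f := fun l => h (Bs l))
        (hh.comp hBsSM).injective (fun l => ?_)
      refine Set.mem_biUnion ⟨l, rfl⟩ ?_
      exact Set.mem_Ico.2 ⟨le_refl _, hh (by omega)⟩
    -- Claim: there is a served index j ≥ J
    have served : ∃ j, J ≤ j ∧ Set.range Bs ∩ Set.Ioo (P j) (P (j + 1)) = ∅ := by
      by_contra hcon
      push_neg at hcon
      have hne : ∀ t : ℕ, (Set.range Bs ∩ Set.Ioo (P (J + t)) (P (J + t + 1))).Nonempty :=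
        fun t => hcon (J + t) (by omega)
      choose e he1 he2 using hne
      choose l hl using fun t => he1 t
      have hlSM : StrictMono l := by
        intro t t' htt
        have h1 : e t < P (J + t + 1) := (he2 t).2
        have h2 : P (J + t') < e t' := (he2 t').1
        have h3 : P (J + t + 1) ≤ P (J + t') := hPSM.monotone (by omega)
        have : Bs (l t) < Bs (l t') := by rw [hl, hl]; omega
        exact hBsSM.lt_iff_lt.1 this
      -- get a large witness
      obtain ⟨n, hn1, hn2⟩ := (frequently_atTop.1 (hG x)) (2 * J + 2)
      have hn2' : P (n + 1) < G' n := lt_of_lt_of_le hn2 (hGG' n)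
      set t := n - J with htdef
      have hnt : n = J + t := by omega
      have hlt : t ≤ l t := hlSM.le_apply
      have hlt1 : 1 ≤ l t := by omega
      have hBslt : Bs (l t) < G' n := by
        have h1 : e t < P (J + t + 1) := (he2 t).2
        have h2 : P (J + t + 1) = P (n + 1) := by rw [hnt]
        rw [hl]
        omega
      have hbig : G' (2 * l t) ≤ Bs (l t) := by
        obtain ⟨l', hl'⟩ : ∃ l', l t = l' + 1 := ⟨l t - 1, by omega⟩
        rw [hl']
        exact hBsbig l'
      have : 2 * l t < n := by
        by_contra hc
        have := hG'mono.monotone (not_lt.1 hc)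
        omega
      omega
    obtain ⟨j, hjJ, hjserved⟩ := served
    -- the good point m
    set m := h (P j + 1) - 1 with hm
    have hhpos : 1 ≤ h (P j + 1) := by
      have := hh (show 0 < P j + 1 by omega)
      omega
    have hm1 : m + 1 = h (P j + 1) := by omega
    refine ⟨m, ?_, ?_⟩
    · -- m ≥ J
      have h1 : P j + 1 ≤ h (P j + 1) := hh.le_apply
      have h2 : j ≤ P j := hPSM.le_apply
      omega
    · -- Ψ x m < NextFn a m
      have hub : Ψ x m < h (P (j + 1)) := by
        have : P (j + 1) = Phi Ψ h x (P j) := rfl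
        rw [this]
        exact phi_spec Ψ hh x (P j) m (by omega)
      have hlb : h (P (j + 1)) ≤ NextFn a m := by
        apply nextFn_ge hainf
        intro k hk hmk
        rw [ha] at hk
        simp only [Set.mem_iUnion, Set.mem_Ico, exists_prop] at hk
        obtain ⟨c, hc, hkc⟩ := hk
        have hc1 : h (P j + 1) < h (c + 1) := by omega
        have hc2 : P j < c := by
          have := hh.lt_iff_lt.1 hc1
          omega
        have hc3 : ¬ (P j < c ∧ c < P (j + 1)) := by
          intro hcc
          have : c ∈ Set.range Bs ∩ Set.Ioo (P j) (P (j + 1)) := ⟨hc, hcc.1, hcc.2⟩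
          rw [hjserved] at this
          exact this
        have hc4 : P (j + 1) ≤ c := by omega
        calc h (P (j + 1)) ≤ h c := hh.monotone hc4
        _ ≤ k := hkc.1
      omega


lemma cont_nat_rng {X : Type*} [TopologicalSpace X] {f : X → ℕ}
    (h : ∀ k, IsOpen (f ⁻¹' {k})) : Continuous f := by
  rw [continuous_def]
  intro s _
  have : f ⁻¹' s = ⋃ k ∈ s, f ⁻¹' {k} := by ext x; simp
  rw [this]
  exact isOpen_biUnion fun k _ => h k

end Stmt16

/-- Main theorem: X is Menger iff for every continuous Ψ : X → Baire, the family
G = {a ∈ [ℕ]^∞ : ∀ f ∈ Ψ[X], next_a ≰* f} is groupwise dense. -/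
theorem stmt_16 (X : Type*) [TopologicalSpace X]
    [TopologicalSpace.SeparableSpace X] [TopologicalSpace.MetrizableSpace X]
    (hzd : ∃ B : Set (Set X), TopologicalSpace.IsTopologicalBasis B ∧ ∀ s ∈ B, IsClopen s) :
    Menger X ↔
      ∀ Ψ : X → Baire, Continuous Ψ →
        GroupwiseDense
          {a : Set ℕ | a.Infinite ∧ ∀ f ∈ Set.range Ψ, ¬ EvLE (NextFn a) f} := by
    classical
  constructor
  · -- Menger → groupwise dense
    intro hX Ψ hΨ
    constructor
    · rintro b ⟨hbinf, hbf⟩ a ha hsub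
      refine ⟨ha, fun f hf => ?_⟩
      have h1 := Stmt16.not_evLE.1 (hbf f hf)
      refine Stmt16.not_evLE.2 ?_
      exact h1.mp ((Stmt16.nextFn_eventually_le ha hsub).mono
        fun n hle hlt => lt_of_lt_of_le hlt hle)
    · intro h hh h0
      obtain ⟨b, hb1, hb2, hb3⟩ := Stmt16.forward_gwd2 hX Ψ hΨ h hh h0
      exact ⟨b, hb1, hb2, hb3⟩
  · -- groupwise dense → Menger
    intro hRHS U hUopen hUcov
    rcases isEmpty_or_nonempty X with hemp | hne
    · exact ⟨fun _ => ∅, fun n => by simp, Set.eq_univ_of_forall fun x => (hemp.false x).elim⟩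
    obtain ⟨Bas, hBas, hclo⟩ := hzd
    haveI : SecondCountableTopology X := by
      letI : MetricSpace X := TopologicalSpace.metrizableSpaceMetric X
      exact UniformSpace.secondCountable_of_separable X
    have refine_ex : ∀ n : ℕ, ∃ V W : ℕ → Set X, (∀ k, IsClopen (V k)) ∧ (∀ k, W k ∈ U n) ∧
        (∀ k, V k ⊆ W k) ∧ (⋃ k, V k) = Set.univ := by
      intro n
      set I := {s : Set X | s ∈ Bas ∧ ∃ u ∈ U n, s ⊆ u} with hI
      have hcov' : ⋃ i : I, (i : Set X) = Set.univ := by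
        apply Set.eq_univ_of_forall
        intro x
        have hx : x ∈ ⋃₀ U n := by rw [hUcov n]; trivial
        obtain ⟨u, hu, hxu⟩ := hx
        obtain ⟨v, hv, hxv, hvu⟩ := hBas.exists_subset_of_mem_open hxu (hUopen n u hu)
        exact Set.mem_iUnion.2 ⟨⟨v, hv, u, hu, hvu⟩, hxv⟩
      obtain ⟨T, hTc, hTcov⟩ := TopologicalSpace.isOpen_iUnion_countable
        (fun i : I => (i : Set X)) (fun i => (hclo _ i.2.1).isOpen)
      have hTne : T.Nonempty := by
        rcases Set.eq_empty_or_nonempty T with he | hne'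
        · exfalso
          obtain ⟨x⟩ := hne
          have hx : x ∈ ⋃ i ∈ T, (i : Set X) := by rw [hTcov, hcov']; trivial
          rw [he] at hx
          simp at hx
        · exact hne'
      obtain ⟨ef, hef⟩ := hTc.exists_eq_range hTne
      choose w hw1 hw2 using fun i : I => i.2.2
      refine ⟨fun k => ((ef k : I) : Set X), fun k => w (ef k), fun k => hclo _ (ef k).2.1,
        fun k => hw1 (ef k), fun k => hw2 (ef k), ?_⟩
      have h1 : (⋃ k, ((ef k : I) : Set X)) = ⋃ i ∈ T, (i : Set X) := by
        rw [hef, Set.biUnion_range]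
      rw [h1, hTcov, hcov']
    choose V W hV hW hVW hVcov using refine_ex
    have hSne : ∀ n (x : X), {k | x ∈ V n k}.Nonempty := by
      intro n x
      have hx : x ∈ ⋃ k, V n k := by rw [hVcov n]; trivial
      exact Set.mem_iUnion.1 hx
    set Ψ : X → Baire := fun x n => sInf {k | x ∈ V n k} with hΨdef
    have hmem : ∀ n (x : X), x ∈ V n (Ψ x n) := fun n x => Nat.sInf_mem (hSne n x)
    have hΨcont : Continuous Ψ := by
      apply continuous_pi
      intro n
      apply Stmt16.cont_nat_rng
      intro k
      have hpre : (fun x => Ψ x n) ⁻¹' {k} =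
          V n k ∩ ⋂ k' ∈ Set.Iio k, (V n k')ᶜ := by
        ext x
        simp only [Set.mem_preimage, Set.mem_singleton_iff, Set.mem_inter_iff,
          Set.mem_iInter, Set.mem_Iio, Set.mem_compl_iff]
        constructor
        · intro hx
          refine ⟨hx ▸ hmem n x, fun k' hk' => ?_⟩
          have hlt : k' < sInf {j | x ∈ V n j} := by
            rw [show sInf {j | x ∈ V n j} = Ψ x n from rfl, hx]; exact hk'
          exact Nat.notMem_of_lt_sInf hlt
        · rintro ⟨h1, h2⟩
          refine le_antisymm (Nat.sInf_le h1) ?_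
          by_contra hc
          exact h2 _ (not_le.1 hc) (hmem n x)
      rw [hpre]
      exact (hV n k).isOpen.inter
        ((Set.finite_Iio k).isOpen_biInter fun k' _ => (hV n k').isClosed.isOpen_compl)
    obtain ⟨_, hgw2⟩ := hRHS Ψ hΨcont
    obtain ⟨b, hbinf, hbG⟩ := hgw2 id strictMono_id rfl
    have hab : (⋃ n ∈ b, Set.Ico (id n) (id (n + 1))) = b := by
      ext m
      simp only [id_eq, Set.mem_iUnion, Set.mem_Ico, exists_prop]
      constructor
      · rintro ⟨n, hn, h1, h2⟩
        have : m = n := by omega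
        rwa [this]
      · intro hm
        exact ⟨m, hm, le_refl _, by omega⟩
    rw [hab] at hbG
    obtain ⟨hbinf', hbnd⟩ := hbG
    refine ⟨fun n => (Finset.range (NextFn b n)).image (W n), ?_, ?_⟩
    · intro n s hs
      simp only [Finset.coe_image, Set.mem_image, Finset.mem_coe, Finset.mem_range] at hs
      obtain ⟨k, _, rfl⟩ := hs
      exact hW n k
    · apply Set.eq_univ_of_forall
      intro x
      have hfreq := Stmt16.not_evLE.1 (hbnd (Ψ x) ⟨x, rfl⟩)
      obtain ⟨n, hn⟩ := hfreq.exists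
      refine Set.mem_iUnion.2 ⟨n, ?_⟩
      refine ⟨W n (Ψ x n), ?_, hVW n _ (hmem n x)⟩
      simp only [Finset.coe_image, Set.mem_image, Finset.mem_coe, Finset.mem_range]
      exact ⟨Ψ x n, hn, rfl⟩
end

section
/- The union of fewer than 𝔤 many spaces with Menger's property has Menger's property; equivalently, 𝔤 ≤ add(Menger). -/
open Filter

/-- The groupwise density number: least cardinality of a family of groupwise
dense subsets of [ℕ]^∞ with empty intersection. -/
noncomputable def gNum : Cardinal :=
  sInf {c : Cardinal | ∃ 𝒢 : Set (Set (Set ℕ)),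
    Cardinal.mk 𝒢 = c ∧ (∀ G ∈ 𝒢, GroupwiseDense G) ∧ ⋂₀ 𝒢 = ∅}

/- ------------------- auxiliary lemmas ------------------- -/

lemma sm_le {f : ℕ → ℕ} (hf : StrictMono f) : ∀ n, n ≤ f n := by
  intro n
  induction n with
  | zero => exact Nat.zero_le _
  | succ n ih => exact Nat.succ_le_of_lt (lt_of_le_of_lt ih (hf (Nat.lt_succ_self n)))

lemma nextFn_spec {a : Set ℕ} (ha : a.Infinite) (m : ℕ) :
    NextFn a m ∈ a ∧ m < NextFn a m := by
  have hne : {k | k ∈ a ∧ m < k}.Nonempty := by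
    by_contra hcon
    rw [Set.not_nonempty_iff_eq_empty] at hcon
    apply ha
    apply (Set.finite_Iic m).subset
    intro k hk
    by_contra hk2
    have hmk : m < k := not_le.mp (fun h => hk2 h)
    have : k ∈ {k | k ∈ a ∧ m < k} := ⟨hk, hmk⟩
    rw [hcon] at this
    exact this
  exact Nat.sInf_mem hne

lemma nextFn_mono_of_subset {a b : Set ℕ} (ha : a.Infinite) (m : ℕ)
    (hsub : ∀ k ∈ a, m < k → k ∈ b) : NextFn b m ≤ NextFn a m := by
  obtain ⟨h1, h2⟩ := nextFn_spec ha m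
  exact Nat.sInf_le ⟨hsub _ h1 h2, h2⟩

/-- Core combinatorial lemma: if `Z` is a Menger space and `ψ : Z → ℕ → ℕ` has open
sublevel sets, then for every interval partition `hh` there is an infinite set `b`
of intervals such that, with `A` the union of the chosen intervals, every `z`
satisfies `ψ z m < NextFn A m` for infinitely many `m`. -/
lemma dense_aux {Z : Type} [TopologicalSpace Z] (hZ : Menger Z)
    (ψ : Z → ℕ → ℕ) (hopen : ∀ m c, IsOpen {z : Z | ψ z m < c})
    (hh : ℕ → ℕ) (hhmono : StrictMono hh) :
    ∃ b : Set ℕ, b.Infinite ∧ (⋃ n ∈ b, Set.Ico (hh n) (hh (n + 1))).Infinite ∧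
      ∀ z : Z, ∃ᶠ m in Filter.atTop,
        ψ z m < NextFn (⋃ n ∈ b, Set.Ico (hh n) (hh (n + 1))) m := by
  classical
  -- chase reaches
  set r : ℕ → (ℕ → ℕ) → ℕ → ℕ :=
    fun n v j => Nat.casesOn j (hh (n + 1)) (fun j' => hh (v j' + 1)) with hrdef
  -- cover elements
  set E : ℕ → (ℕ → ℕ) → Set Z := fun n v => {z | ∀ j ≤ n, ψ z (r n v j) < v j} with hEdef
  set C : ℕ → Set (Set Z) :=
    fun n => {S | ∃ v : ℕ → ℕ, StrictMono v ∧ hh (n + 1) < v 0 ∧ S = E n v} with hCdef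
  have hEopen : ∀ n v, IsOpen (E n v) := by
    intro n v
    have hEq : E n v = ⋂ j ∈ Set.Iic n, {z : Z | ψ z (r n v j) < v j} := by
      ext z
      simp only [hEdef, Set.mem_setOf_eq, Set.mem_iInter, Set.mem_Iic]
    rw [hEq]
    exact (Set.finite_Iic n).isOpen_biInter fun j _ => hopen _ _
  have hCopen : ∀ n, ∀ S ∈ C n, IsOpen S := by
    rintro n S ⟨v, -, -, rfl⟩
    exact hEopen n v
  have hCcov : ∀ n, ⋃₀ C n = Set.univ := by
    intro n
    rw [Set.eq_univ_iff_forall]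
    intro z
    set v : ℕ → ℕ := fun j =>
      Nat.rec (max (hh (n + 1) + 1) (ψ z (hh (n + 1)) + 1))
        (fun _ vj => max (vj + 1) (ψ z (hh (vj + 1)) + 1)) j with hvdef
    have hv0 : v 0 = max (hh (n + 1) + 1) (ψ z (hh (n + 1)) + 1) := rfl
    have hvsucc : ∀ j, v (j + 1) = max (v j + 1) (ψ z (hh (v j + 1)) + 1) := fun j => rfl
    have hvmono : StrictMono v := by
      apply strictMono_nat_of_lt_succ
      intro j
      rw [hvsucc]
      exact lt_of_lt_of_le (Nat.lt_succ_self _) (le_max_left _ _)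
    refine Set.mem_sUnion.mpr ⟨E n v, ⟨v, hvmono, ?_, rfl⟩, ?_⟩
    · rw [hv0]
      exact lt_of_lt_of_le (Nat.lt_succ_self _) (le_max_left _ _)
    · intro j _
      cases j with
      | zero =>
        show ψ z (hh (n + 1)) < v 0
        rw [hv0]
        exact lt_of_lt_of_le (Nat.lt_succ_self _) (le_max_right _ _)
      | succ j' =>
        show ψ z (hh (v j' + 1)) < v (j' + 1)
        rw [hvsucc]
        exact lt_of_lt_of_le (Nat.lt_succ_self _) (le_max_right _ _)
  -- Menger applications, one for each j
  have happ : ∀ j : ℕ, ∃ F : ℕ → Finset (Set Z),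
      (∀ k, ↑(F k) ⊆ C (Nat.pair j k)) ∧
      (⋃ k, ⋃₀ ((F k : Set (Set Z)))) = Set.univ :=
    fun j => hZ (fun k => C (Nat.pair j k)) (fun k => hCopen _) (fun k => hCcov _)
  choose Fap hFsub hFcov using happ
  set 𝔉 : ℕ → Finset (Set Z) := fun n => Fap n.unpair.1 n.unpair.2 with h𝔉def
  have h𝔉C : ∀ n, ↑(𝔉 n) ⊆ C n := by
    intro n
    have := hFsub n.unpair.1 n.unpair.2
    rwa [Nat.pair_unpair] at this
  -- extract tuples from selected sets
  set vof : ℕ → Set Z → (ℕ → ℕ) := fun n S =>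
    if hS : ∃ v : ℕ → ℕ, StrictMono v ∧ hh (n + 1) < v 0 ∧ S = E n v then hS.choose
    else id with hvofdef
  have hvof : ∀ n S, S ∈ C n →
      StrictMono (vof n S) ∧ hh (n + 1) < vof n S 0 ∧ S = E n (vof n S) := by
    intro n S hS
    have hS' : ∃ v : ℕ → ℕ, StrictMono v ∧ hh (n + 1) < v 0 ∧ S = E n v := hS
    simp only [hvofdef, dif_pos hS']
    exact hS'.choose_spec
  -- the blocks
  set Λ : ℕ → ℕ := fun n => (𝔉 n).sup (fun S => vof n S n) with hΛdef
  set P : ℕ → ℕ :=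
    fun n => Nat.rec (Λ 0) (fun n' Pn => max (Pn + 1) (Λ (n' + 1))) n with hPdef
  have hPsucc : ∀ n, P (n + 1) = max (P n + 1) (Λ (n + 1)) := fun n => rfl
  have hPmono : StrictMono P := by
    apply strictMono_nat_of_lt_succ
    intro n
    rw [hPsucc]
    exact lt_of_lt_of_le (Nat.lt_succ_self _) (le_max_left _ _)
  have hPΛ : ∀ n, Λ n ≤ P n := by
    intro n
    cases n with
    | zero => exact le_refl _
    | succ n' => rw [hPsucc]; exact le_max_right _ _
  set A := ⋃ n ∈ Set.range P, Set.Ico (hh n) (hh (n + 1)) with hAdef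
  have hAmem : ∀ k, k ∈ A ↔ ∃ m, hh (P m) ≤ k ∧ k < hh (P m + 1) := by
    intro k
    simp only [hAdef, Set.mem_iUnion, Set.mem_range, Set.mem_Ico, exists_prop]
    constructor
    · rintro ⟨n, ⟨m, rfl⟩, hk⟩
      exact ⟨m, hk⟩
    · rintro ⟨m, hk⟩
      exact ⟨P m, ⟨m, rfl⟩, hk⟩
  have hAinf : A.Infinite := by
    apply Set.Infinite.mono (s := Set.range (fun m => hh (P m)))
    · rintro _ ⟨m, rfl⟩
      exact (hAmem _).mpr ⟨m, le_rfl, hhmono (Nat.lt_succ_self _)⟩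
    · exact Set.infinite_range_of_injective (hhmono.comp hPmono).injective
  -- the events
  have hev : ∀ z : Z, ∀ N : ℕ, ∃ m, N ≤ m ∧ ψ z m < NextFn A m := by
    intro z N
    have hzu : z ∈ ⋃ k, ⋃₀ ((Fap N k : Set (Set Z))) := by
      rw [hFcov N]; exact Set.mem_univ z
    rw [Set.mem_iUnion] at hzu
    obtain ⟨k, hk⟩ := hzu
    rw [Set.mem_sUnion] at hk
    obtain ⟨S, hSF, hzS⟩ := hk
    set n := Nat.pair N k with hndef
    have hn𝔉 : S ∈ 𝔉 n := by
      have hup : (Nat.pair N k).unpair = (N, k) := Nat.unpair_pair N k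
      simp only [h𝔉def, hndef, hup]
      exact hSF
    have hNn : N ≤ n := Nat.left_le_pair N k
    have hSC : S ∈ C n := h𝔉C n hn𝔉
    obtain ⟨hvm, hvz0, hSE⟩ := hvof n S hSC
    set v := vof n S with hvdef2
    have hzch : ∀ j ≤ n, ψ z (r n v j) < v j := by
      rw [hSE] at hzS
      exact hzS
    -- find a clean zone
    have hclean : ∃ j, j ≤ n ∧ ∀ m, m < n → ∀ k', hh (P m) ≤ k' → k' < hh (P m + 1) →
        r n v j < k' → v j ≤ k' := by
      by_contra hcon
      push_neg at hcon
      have hcon' : ∀ j : ℕ, ∃ m : ℕ, j ≤ n → m < n ∧ ∃ k', hh (P m) ≤ k' ∧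
          k' < hh (P m + 1) ∧ r n v j < k' ∧ k' < v j := by
        intro j
        by_cases hj : j ≤ n
        · obtain ⟨m, hm1, k', h1, h2, h3, h4⟩ := hcon j hj
          exact ⟨m, fun _ => ⟨hm1, k', h1, h2, h3, h4⟩⟩
        · exact ⟨0, fun hj' => absurd hj' hj⟩
      choose φ hφ using hcon'
      have hmaps : ∀ j ∈ Finset.Iic n, φ j ∈ Finset.range n := fun j hj =>
        Finset.mem_range.mpr (hφ j (Finset.mem_Iic.mp hj)).1
      have hcard : (Finset.range n).card < (Finset.Iic n).card := by
        rw [Finset.card_range, Nat.card_Iic]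
        omega
      obtain ⟨j1, hj1, j2, hj2, hne, heq⟩ :=
        Finset.exists_ne_map_eq_of_card_lt_of_maps_to hcard hmaps
      rw [Finset.mem_Iic] at hj1 hj2
      have key : ∀ ja jb, ja ≤ n → jb ≤ n → ja < jb → φ ja = φ jb → False := by
        intro ja jb hja hjb hab hphi
        obtain ⟨-, k1, hk1a, hk1b, hk1c, hk1d⟩ := hφ ja hja
        obtain ⟨-, k2, hk2a, hk2b, hk2c, hk2d⟩ := hφ jb hjb
        rw [hphi] at hk1a hk1b
        obtain ⟨jb', rfl⟩ : ∃ jb', jb = jb' + 1 := ⟨jb - 1, by omega⟩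
        have hrjb : r n v (jb' + 1) = hh (v jb' + 1) := rfl
        rw [hrjb] at hk2c
        have hvv : v ja ≤ v jb' := hvm.monotone (by omega)
        have h1 : hh (v ja + 1) ≤ hh (v jb' + 1) := hhmono.monotone (by omega)
        have h2 : hh (v ja + 1) < hh (P (φ (jb' + 1)) + 1) := by omega
        have h3 : v ja + 1 < P (φ (jb' + 1)) + 1 := hhmono.lt_iff_lt.mp h2
        have h4 : P (φ (jb' + 1)) ≤ hh (P (φ (jb' + 1))) := sm_le hhmono _
        omega
      rcases hne.lt_or_gt with hlt | hlt
      · exact key j1 j2 hj1 hj2 hlt heq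
      · exact key j2 j1 hj2 hj1 hlt heq.symm
    obtain ⟨j, hjn, hcl⟩ := hclean
    refine ⟨r n v j, ?_, ?_⟩
    · -- N ≤ witness
      have hnle : n + 1 ≤ hh (n + 1) := sm_le hhmono (n + 1)
      cases j with
      | zero =>
        show N ≤ hh (n + 1)
        omega
      | succ j' =>
        show N ≤ hh (v j' + 1)
        have h5 : v 0 ≤ v j' := hvm.monotone (Nat.zero_le _)
        have h6 : v j' + 1 ≤ hh (v j' + 1) := sm_le hhmono _
        omega
    · -- the event
      have hvj : ψ z (r n v j) < v j := hzch j hjn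
      have hge : v j ≤ NextFn A (r n v j) := by
        have hforall : ∀ k', k' ∈ A → r n v j < k' → v j ≤ k' := by
          intro k' hk'A hk'r
          obtain ⟨m, hm1, hm2⟩ := (hAmem k').mp hk'A
          by_cases hmn : m < n
          · exact hcl m hmn k' hm1 hm2 hk'r
          · push_neg at hmn
            have e1 : v j ≤ v n := hvm.monotone hjn
            have e2 : vof n S n ≤ Λ n := by
              rw [hΛdef]
              exact Finset.le_sup (f := fun S => vof n S n) hn𝔉
            have e3 : Λ n ≤ P n := hPΛ n
            have e4 : P n ≤ P m := hPmono.monotone hmn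
            have e5 : P m ≤ hh (P m) := sm_le hhmono _
            have e6 : v n = vof n S n := rfl
            omega
        obtain ⟨hmemA, hgt⟩ := nextFn_spec hAinf (r n v j)
        exact hforall _ hmemA hgt
      exact lt_of_lt_of_le hvj hge
  refine ⟨Set.range P, Set.infinite_range_of_injective hPmono.injective, hAinf, ?_⟩
  intro z
  rw [Filter.frequently_atTop]
  intro N
  obtain ⟨m, hm1, hm2⟩ := hev z N
  exact ⟨m, hm1, hm2⟩

/-- The union of fewer than 𝔤 many Menger subspaces is Menger. -/
theorem stmt_17 (X : Type) [TopologicalSpace X]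
    [TopologicalSpace.SeparableSpace X] [TopologicalSpace.MetrizableSpace X]
    (hzd : ∃ B : Set (Set X), TopologicalSpace.IsTopologicalBasis B ∧ ∀ s ∈ B, IsClopen s)
    (ι : Type) (hcard : Cardinal.mk ι < gNum)
    (Xi : ι → Set X) (hM : ∀ i, Menger (Xi i)) (hcover : (⋃ i, Xi i) = Set.univ) :
    Menger X := by
  classical
  intro U hUopen hUcov
  rcases isEmpty_or_nonempty X with hXe | hXne
  · refine ⟨fun _ => ∅, fun n => by simp, ?_⟩
    have huniv : (Set.univ : Set X) = ∅ := Set.univ_eq_empty_iff.mpr hXe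
    simp [huniv]
  · letI : PseudoMetricSpace X := TopologicalSpace.pseudoMetrizableSpacePseudoMetric X
    haveI : SecondCountableTopology X := UniformSpace.secondCountable_of_separable X
    -- countable subcovers
    have hW : ∀ m : ℕ, ∃ Wm : ℕ → Set X, (∀ k, Wm k ∈ U m) ∧ (⋃ k, Wm k) = Set.univ := by
      intro m
      obtain ⟨T, hTc, hTsub, hTU⟩ := TopologicalSpace.isOpen_sUnion_countable (U m) (hUopen m)
      have hTuniv : ⋃₀ T = Set.univ := by rw [hTU, hUcov m]
      have hTne : T.Nonempty := by
        rcases Set.eq_empty_or_nonempty T with rfl | h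
        · exfalso
          obtain ⟨x⟩ := hXne
          have hx : x ∈ ⋃₀ (∅ : Set (Set X)) := hTuniv.symm ▸ Set.mem_univ x
          simpa using hx
        · exact h
      obtain ⟨f, hf⟩ := Set.Countable.exists_eq_range hTc hTne
      refine ⟨f, fun k => hTsub ?_, ?_⟩
      · rw [hf]; exact Set.mem_range_self k
      · rw [← Set.sUnion_range, ← hf, hTuniv]
    choose W hWU hWcov using hW
    have hWex : ∀ (x : X) (m : ℕ), ∃ k, x ∈ W m k := by
      intro x m
      have : x ∈ ⋃ k, W m k := by rw [hWcov m]; exact Set.mem_univ x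
      exact Set.mem_iUnion.mp this
    set ψ : X → ℕ → ℕ := fun x m => Nat.find (hWex x m) with hψdef
    have hψ_mem : ∀ x m, x ∈ W m (ψ x m) := fun x m => Nat.find_spec (hWex x m)
    have hψ_open : ∀ m c, IsOpen {x : X | ψ x m < c} := by
      intro m c
      have hEq : {x : X | ψ x m < c} = ⋃ k ∈ Set.Iio c, W m k := by
        ext x
        simp only [Set.mem_setOf_eq, Set.mem_iUnion, Set.mem_Iio, exists_prop]
        constructor
        · intro hlt
          exact ⟨ψ x m, hlt, hψ_mem x m⟩
        · rintro ⟨k, hk, hxk⟩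
          exact lt_of_le_of_lt (Nat.find_min' (hWex x m) hxk) hk
      rw [hEq]
      exact isOpen_biUnion fun k _ => hUopen m _ (hWU m k)
    set G : ι → Set (Set ℕ) := fun i =>
      {a | a.Infinite ∧ ∀ x, x ∈ Xi i →
        ∃ᶠ m in Filter.atTop, ψ x m < NextFn a m} with hGdef
    have hGdense : ∀ i, GroupwiseDense (G i) := by
      intro i
      constructor
      · rintro bG ⟨hbinf, hbev⟩ a hainf hab
        refine ⟨hainf, ?_⟩
        intro x hx
        rw [Filter.frequently_atTop]
        intro N
        obtain ⟨B, hB⟩ : ∃ B, ∀ k ∈ a \ bG, k ≤ B := by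
          obtain ⟨B, hB⟩ := hab.bddAbove
          exact ⟨B, fun k hk => hB hk⟩
        obtain ⟨m, hm1, hm2⟩ := (Filter.frequently_atTop.mp (hbev x hx)) (max N B)
        refine ⟨m, le_trans (le_max_left _ _) hm1, ?_⟩
        have hsub : ∀ k ∈ a, m < k → k ∈ bG := by
          intro k hk hmk
          by_contra hkb
          have h1 := hB k ⟨hk, hkb⟩
          have h2 : B ≤ m := le_trans (le_max_right N B) hm1
          omega
        exact lt_of_lt_of_le hm2 (nextFn_mono_of_subset hainf m hsub)
      · intro hh hhmono _
        obtain ⟨b, hbinf, hAinf, hev⟩ := dense_aux (hM i) (fun z m => ψ (↑z) m)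
          (fun m c => by
            have hEq : {z : ↥(Xi i) | ψ (↑z) m < c} =
                Subtype.val ⁻¹' {x : X | ψ x m < c} := rfl
            rw [hEq]
            exact (hψ_open m c).preimage continuous_subtype_val) hh hhmono
        refine ⟨b, hbinf, hAinf, ?_⟩
        intro x hx
        exact hev ⟨x, hx⟩
    have hne : (⋂₀ (Set.range G)).Nonempty := by
      by_contra hcon
      rw [Set.not_nonempty_iff_eq_empty] at hcon
      have hmem : Cardinal.mk ↥(Set.range G) ∈ {c : Cardinal |
          ∃ 𝒢 : Set (Set (Set ℕ)), Cardinal.mk ↥𝒢 = c ∧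
            (∀ G' ∈ 𝒢, GroupwiseDense G') ∧ ⋂₀ 𝒢 = ∅} := by
        refine ⟨Set.range G, rfl, ?_, hcon⟩
        rintro G' ⟨i, rfl⟩
        exact hGdense i
      have h1 : gNum ≤ Cardinal.mk ↥(Set.range G) := csInf_le' hmem
      have h2 : Cardinal.mk ↥(Set.range G) ≤ Cardinal.mk ι := Cardinal.mk_range_le
      exact absurd hcard (not_lt_of_ge (h1.trans h2))
    obtain ⟨a, ha⟩ := hne
    refine ⟨fun m => (Finset.range (NextFn a m)).image (W m), ?_, ?_⟩
    · intro m s hs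
      simp only [Finset.coe_image, Set.mem_image, Finset.mem_coe, Finset.mem_range] at hs
      obtain ⟨k, -, rfl⟩ := hs
      exact hWU m k
    · rw [Set.eq_univ_iff_forall]
      intro x
      have hxU : x ∈ ⋃ i, Xi i := by rw [hcover]; exact Set.mem_univ x
      obtain ⟨i, hxi⟩ := Set.mem_iUnion.mp hxU
      have haG : a ∈ G i := ha _ ⟨i, rfl⟩
      obtain ⟨-, hfreq⟩ := haG
      obtain ⟨m, hm⟩ := (hfreq x hxi).exists
      refine Set.mem_iUnion.mpr ⟨m, Set.mem_sUnion.mpr ⟨W m (ψ x m), ?_, hψ_mem x m⟩⟩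
      simp only [Finset.coe_image, Set.mem_image, Finset.mem_coe, Finset.mem_range]
      exact ⟨ψ x m, hm, rfl⟩
end

section
/- 𝔟 ≤ add(Menger) ≤ cf(𝔡): the additivity number of Menger's property is at least the bounding number 𝔟 and at most the cofinality of the dominating number 𝔡. -/
open Filter

/-- The unbounding number 𝔟. -/
noncomputable def bNum : Cardinal :=
  sInf {c : Cardinal | ∃ B : Set Baire, Cardinal.mk B = c ∧
    ∀ g : Baire, ∃ f ∈ B, ¬ EvLE f g}

/-- The dominating number 𝔡. -/
noncomputable def dNum : Cardinal :=
  sInf {c : Cardinal | ∃ D : Set Baire, Cardinal.mk D = c ∧ Dominating D}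

/-- add(Menger): the least cardinality of a family of Menger subspaces of a
separable zero-dimensional metrizable space whose union is not Menger. -/
noncomputable def addMenger : Cardinal :=
  sInf {c : Cardinal | ∃ (X : Type) (t : TopologicalSpace X),
    @TopologicalSpace.SeparableSpace X t ∧ @TopologicalSpace.MetrizableSpace X t ∧
    (∃ B : Set (Set X), @TopologicalSpace.IsTopologicalBasis X t B ∧
      ∀ s ∈ B, @IsClopen X t s) ∧
    ∃ 𝒜 : Set (Set X), Cardinal.mk 𝒜 = c ∧
      (∀ A ∈ 𝒜, @Menger A (TopologicalSpace.induced Subtype.val t)) ∧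
      ¬ @Menger (⋃₀ 𝒜) (TopologicalSpace.induced Subtype.val t)}

/-!
Lower bound: if fewer than 𝔟 Menger subspaces cover `⋃₀ 𝒜`, enumerate a sequence of open covers of
the union; each `A ∈ 𝒜` yields a function `φ_A` such that every point of `A` is, for infinitely
many `n`, covered by one of the first `φ_A n` members of the `n`-th cover. A single `g`
eventually dominating all `φ_A` then picks finite subcovers for the union.

Upper bound: a dominating family `D` of size 𝔡 is not Menger (the covers `{x | x n ≤ k}` would
yield a function that no member of `D` eventually dominates), but, well-ordered in type `𝔡.ord`,
it is the union of `cf 𝔡` initial segments along a cofinal set, each of size less than 𝔡 and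
hence Menger.
-/

open Set Filter TopologicalSpace
open scoped Cardinal

theorem Set.Finite.exists_subset_image_Iio {β : Type*} {f : ℕ → β} {s : Set β}
    (hs : s.Finite) (hsf : s ⊆ range f) : ∃ m, s ⊆ f '' Iio m := by
  obtain ⟨t, -, ht, hst⟩ := exists_subset_image_finite_and.1
    ⟨s, (image_univ (f := f)).symm ▸ hsf, hs, subset_rfl⟩
  obtain ⟨b, hb⟩ := ht.bddAbove
  exact ⟨b + 1, hst.trans (image_mono fun k hk => Nat.lt_succ_of_le (hb hk))⟩

section Menger

variable {Z : Type*} [TopologicalSpace Z]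

theorem Menger.exists_bound (hZ : Menger Z) {v : ℕ → ℕ → Set Z}
    (hvo : ∀ n k, IsOpen (v n k)) (hv : ∀ n, ⋃ k, v n k = univ) :
    ∃ φ : ℕ → ℕ, ∀ x, ∃ n, ∃ k < φ n, x ∈ v n k := by
  obtain ⟨F, hFv, hF⟩ := hZ (fun n => range (v n))
    (by rintro n _ ⟨k, rfl⟩; exact hvo n k) (fun n => by rw [sUnion_range, hv n])
  choose φ hφ using fun n => (F n).finite_toSet.exists_subset_image_Iio (hFv n)
  refine ⟨φ, fun x => ?_⟩
  obtain ⟨n, s, hs, hxs⟩ : ∃ n, ∃ s ∈ F n, x ∈ s := by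
    simpa only [mem_iUnion, mem_sUnion, Finset.mem_coe] using hF.ge (mem_univ x)
  obtain ⟨k, hk, rfl⟩ := hφ n hs
  exact ⟨n, k, hk, hxs⟩

theorem Menger.frequently_exists_bound (hZ : Menger Z) {v : ℕ → ℕ → Set Z}
    (hvo : ∀ n k, IsOpen (v n k)) (hv : ∀ n, ⋃ k, v n k = univ) :
    ∃ φ : ℕ → ℕ, ∀ x, ∃ᶠ n in atTop, ∃ k < φ n, x ∈ v n k := by
  -- bound every tail `v (· + j)` of the sequence, then take a diagonal maximum
  choose Φ hΦ using fun j =>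
    hZ.exists_bound (v := fun m => v (m + j)) (fun m => hvo (m + j)) (fun m => hv (m + j))
  refine ⟨fun n => (Finset.range (n + 1)).sup fun j => Φ j (n - j),
    fun x => frequently_atTop.2 fun j => ?_⟩
  obtain ⟨m, k, hk, hx⟩ := hΦ j x
  have hΦle : Φ j (m + j - j) ≤ (Finset.range (m + j + 1)).sup fun i => Φ i (m + j - i) :=
    Finset.le_sup (f := fun i => Φ i (m + j - i)) (Finset.mem_range.2 (by omega))
  exact ⟨m + j, Nat.le_add_left j m, k, hk.trans_le (by simpa using hΦle), hx⟩

theorem menger_of_forall_exists_bound [LindelofSpace Z]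
    (h : ∀ v : ℕ → ℕ → Set Z, (∀ n k, IsOpen (v n k)) → (∀ n, ⋃ k, v n k = univ) →
      ∃ φ : ℕ → ℕ, ∀ x, ∃ n, ∃ k < φ n, x ∈ v n k) :
    Menger Z := by
  classical
  intro U hUo hU
  rcases isEmpty_or_nonempty Z with hZ | ⟨⟨x₀⟩⟩
  · exact ⟨fun _ => ∅, by simp, eq_univ_of_forall fun x => isEmptyElim x⟩
  have hsub : ∀ n, ∃ u : ℕ → U n, ⋃ k, (u k : Set Z) = univ := fun n => by
    obtain ⟨s, hs, -⟩ := mem_sUnion.1 ((hU n).ge (mem_univ x₀))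
    have : Nonempty (U n) := ⟨⟨s, hs⟩⟩
    obtain ⟨u, hu⟩ := isLindelof_univ.indexed_countable_subcover (Subtype.val : U n → Set Z)
      (fun s => hUo n s s.2) (by rw [← sUnion_eq_iUnion, hU n])
    exact ⟨u, univ_subset_iff.1 hu⟩
  choose u hu using hsub
  obtain ⟨φ, hφ⟩ := h (fun n k => u n k) (fun n k => hUo n _ (u n k).2) hu
  refine ⟨fun n => (Finset.range (φ n)).image fun k => u n k, fun n => ?_, ?_⟩
  · simp only [Finset.coe_image, image_subset_iff]
    exact fun k _ => (u n k).2
  · refine eq_univ_of_forall fun x => ?_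
    obtain ⟨n, k, hk, hx⟩ := hφ x
    simp only [mem_iUnion, mem_sUnion, Finset.coe_image, mem_image, Finset.mem_coe,
      Finset.mem_range]
    exact ⟨n, _, ⟨k, hk, rfl⟩, hx⟩

end Menger

theorem dominating_univ : Dominating univ :=
  fun g => ⟨g, mem_univ g, .of_forall fun _ => le_rfl⟩

theorem bNum_le_mk {B : Set Baire} (hB : ∀ g : Baire, ∃ f ∈ B, ¬ EvLE f g) : bNum ≤ #B :=
  csInf_le' ⟨B, rfl, hB⟩

theorem dNum_le_mk {D : Set Baire} (hD : Dominating D) : dNum ≤ #D := csInf_le' ⟨D, rfl, hD⟩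

theorem exists_dominating_mk_eq_dNum : ∃ D : Set Baire, Dominating D ∧ #D = dNum := by
  obtain ⟨D, hD, hdom⟩ := csInf_mem (⟨_, univ, rfl, dominating_univ⟩ :
    {c : Cardinal | ∃ D : Set Baire, #D = c ∧ Dominating D}.Nonempty)
  exact ⟨D, hdom, hD⟩

theorem Dominating.infinite {D : Set Baire} (hD : Dominating D) : D.Infinite := by
  intro hfin
  obtain ⟨f, hf, hgf⟩ := hD fun n => hfin.toFinset.sup (· n) + 1
  obtain ⟨n, hn⟩ := hgf.exists
  exact Nat.not_succ_le_self _ (hn.trans (Finset.le_sup (f := (· n)) (hfin.mem_toFinset.2 hf)))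

theorem aleph0_le_dNum : ℵ₀ ≤ dNum := by
  obtain ⟨D, hD, hDcard⟩ := exists_dominating_mk_eq_dNum
  exact hDcard ▸ Cardinal.infinite_iff.1 hD.infinite.to_subtype

theorem exists_not_evLE_of_mk_lt_dNum {F : Set Baire} (h : #F < dNum) :
    ∃ g : Baire, ∀ f ∈ F, ¬ EvLE g f := by
  by_contra! hF
  exact (dNum_le_mk hF).not_gt h

theorem exists_evLE_of_mk_lt_bNum {F : Set Baire} (h : #F < bNum) :
    ∃ g : Baire, ∀ f ∈ F, EvLE f g := by
  by_contra! hF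
  exact (bNum_le_mk hF).not_gt h

theorem exists_sUnion_eq_of_aleph0_le {α : Type*} {D : Set α} (hD : ℵ₀ ≤ #D) :
    ∃ 𝒜 : Set (Set α), ⋃₀ 𝒜 = D ∧ #𝒜 ≤ (#D).ord.cof ∧ ∀ A ∈ 𝒜, #A < #D := by
  have hT : #(#D).ord.ToType = #D := Cardinal.mk_ord_toType _
  obtain ⟨e⟩ := Cardinal.eq.1 hT.symm
  obtain ⟨S, hS, hScof⟩ := Order.exists_cof_eq (#D).ord.ToType
  refine ⟨(fun s => Subtype.val '' (e ⁻¹' Iic s)) '' S, ?_, ?_, ?_⟩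
  · refine Subset.antisymm ?_ fun x hx => ?_
    · rintro _ ⟨_, ⟨s, -, rfl⟩, y, -, rfl⟩
      exact y.2
    · obtain ⟨s, hs, hle⟩ := hS (e ⟨x, hx⟩)
      exact ⟨_, ⟨s, hs, rfl⟩, ⟨x, hx⟩, hle, rfl⟩
  · exact Cardinal.mk_image_le.trans (hScof.trans (Ordinal.cof_toType _)).le
  · rintro _ ⟨s, -, rfl⟩
    calc #(Subtype.val '' (e ⁻¹' Iic s)) ≤ #(e ⁻¹' Iic s) := Cardinal.mk_image_le
      _ = #(Iic s) := Cardinal.mk_preimage_equiv e _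
      _ < #D := (Cardinal.mk_Iic_lt s (by rw [hT, Ordinal.type_toType])
        (hD.trans_eq hT.symm)).trans_eq hT

theorem not_menger_of_dominating {D : Set Baire} (hD : Dominating D) : ¬ Menger D := by
  intro hM
  obtain ⟨φ, hφ⟩ :=
    hM.frequently_exists_bound (v := fun n k => (fun x : D => x.1 n) ⁻¹' Iic k)
    (fun n k => (isOpen_discrete _).preimage ((continuous_apply n).comp continuous_subtype_val))
    (fun n => eq_univ_of_forall fun x => mem_iUnion.2 ⟨x.1 n, le_refl (x.1 n)⟩)
  obtain ⟨f, hf, hφf⟩ := hD φ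
  obtain ⟨n, ⟨k, hk, hfk⟩, hφn⟩ := ((hφ ⟨f, hf⟩).and_eventually hφf).exists
  exact (hφn.trans (mem_Iic.1 hfk)).not_gt hk

theorem menger_of_mk_lt_dNum {Z : Type} [TopologicalSpace Z] [LindelofSpace Z]
    (h : #Z < dNum) : Menger Z := by
  refine menger_of_forall_exists_bound fun v _ hv => ?_
  choose g hg using fun n x => mem_iUnion.1 ((hv n).ge (mem_univ x))
  obtain ⟨φ, hφ⟩ := exists_not_evLE_of_mk_lt_dNum (Cardinal.mk_range_le.trans_lt h :
    #(range fun x n => g n x) < dNum)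
  refine ⟨φ, fun x => ?_⟩
  obtain ⟨n, hn⟩ := (not_eventually.1 (hφ _ ⟨x, rfl⟩)).exists
  exact ⟨n, g n x, not_le.1 hn, hg n x⟩

theorem menger_sUnion_of_mk_lt_bNum {X : Type} [TopologicalSpace X] [HereditarilyLindelofSpace X]
    {𝒜 : Set (Set X)} (h𝒜 : ∀ A ∈ 𝒜, Menger A) (hlt : #𝒜 < bNum) : Menger (⋃₀ 𝒜) := by
  refine menger_of_forall_exists_bound fun v hvo hv => ?_
  choose φ hφ using fun A : 𝒜 => (h𝒜 A A.2).frequently_exists_bound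
    (v := fun n k => inclusion (subset_sUnion_of_mem A.2) ⁻¹' v n k)
    (fun n k => (hvo n k).preimage (continuous_inclusion _))
    (fun n => by rw [← preimage_iUnion, hv n, preimage_univ])
  obtain ⟨g, hg⟩ :=
    exists_evLE_of_mk_lt_bNum (Cardinal.mk_range_le.trans_lt hlt : #(range φ) < bNum)
  refine ⟨g, fun ⟨x, A, hA, hxA⟩ => ?_⟩
  obtain ⟨n, ⟨k, hk, hx⟩, hn⟩ :=
    ((hφ ⟨A, hA⟩ ⟨x, hxA⟩).and_eventually (hg _ ⟨⟨A, hA⟩, rfl⟩)).exists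
  exact ⟨n, k, hk.trans_le hn, hx⟩

theorem exists_isTopologicalBasis_isClopen_baire :
    ∃ B : Set (Set Baire), IsTopologicalBasis B ∧ ∀ s ∈ B, IsClopen s := by
  refine ⟨_, isTopologicalBasis_pi fun _ => isTopologicalBasis_opens, ?_⟩
  rintro _ ⟨U, F, -, rfl⟩
  exact ⟨isClosed_set_pi fun _ _ => isClosed_discrete _,
    isOpen_set_pi F.finite_toSet fun _ _ => isOpen_discrete _⟩

theorem addMenger_le_mk {𝒜 : Set (Set Baire)} (h𝒜 : ∀ A ∈ 𝒜, Menger A)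
    (hU : ¬ Menger (⋃₀ 𝒜)) : addMenger ≤ #𝒜 :=
  csInf_le' ⟨Baire, inferInstance, inferInstance, inferInstance,
    exists_isTopologicalBasis_isClopen_baire, 𝒜, rfl, h𝒜, hU⟩

theorem bNum_le_addMenger {𝒜 : Set (Set Baire)} (h𝒜 : ∀ A ∈ 𝒜, Menger A)
    (hU : ¬ Menger (⋃₀ 𝒜)) : bNum ≤ addMenger := by
  refine le_csInf ⟨_, Baire, inferInstance, inferInstance, inferInstance,
    exists_isTopologicalBasis_isClopen_baire, 𝒜, rfl, h𝒜, hU⟩ ?_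
  rintro _ ⟨X, t, hsep, hmet, -, ℬ, rfl, hℬ, hnU⟩
  let := pseudoMetrizableSpacePseudoMetric X
  have := UniformSpace.secondCountable_of_separable X
  exact not_lt.1 fun hlt => hnU (menger_sUnion_of_mk_lt_bNum hℬ hlt)

/-- 𝔟 ≤ add(Menger) ≤ cf(𝔡). -/
theorem stmt_18 : bNum ≤ addMenger ∧ addMenger ≤ (Cardinal.ord dNum).cof := by
  obtain ⟨D, hD, hDcard⟩ := exists_dominating_mk_eq_dNum
  obtain ⟨𝒜, rfl, h𝒜card, h𝒜small⟩ := exists_sUnion_eq_of_aleph0_le (hDcard ▸ aleph0_le_dNum)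
  rw [hDcard] at h𝒜card h𝒜small
  have h𝒜 : ∀ A ∈ 𝒜, Menger A := fun A hA => menger_of_mk_lt_dNum (h𝒜small A hA)
  have hU := not_menger_of_dominating hD
  exact ⟨bNum_le_addMenger h𝒜 hU, (addMenger_le_mk h𝒜 hU).trans h𝒜card⟩
end
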